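/- With K, π, T and Γ as above, the following identity holds: π(Γ(f,f)) = π(−[f − π(f)]² + 2 f T(f)) for every bounded measurable f. Equivalently, π(Γ(f,f)) = Var_π(f) + 2 Σ_{j=1}^∞ Cov_π(f, K^j f), where Cov_π(f,g) := π((f−π(f))(g−π(g))). -/

import Mathlib

open MeasureTheory ProbabilityTheory

variable {E : Type} [MeasurableSpace E]

/-- Iterates of a Markov kernel. -/
noncomputable def kiter (K : Kernel E E) : ℕ → E → Measure E
  | 0, x => Measure.dirac x
  | n + 1, x => Measure.bind (kiter K n x) (fun y => K y)

/-- The resolvent operator `T(f)(x) = Σ_{j≥0} [K^j(f)(x) − π(f)]`. -/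
noncomputable def mcResolvent (K : Kernel E E) (π : Measure E) (f : E → ℝ) (x : E) : ℝ :=
  ∑' j : ℕ, ((∫ y, f y ∂(kiter K j x)) - ∫ y, f y ∂π)

/-- `Γ(f,g)(x) = K[(T(f) − KT(f)(x))(T(g) − KT(g)(x))](x)`. -/
noncomputable def covFun (K : Kernel E E) (π : Measure E) (f g : E → ℝ) (x : E) : ℝ :=
  ∫ y, (mcResolvent K π f y - ∫ z, mcResolvent K π f z ∂(K x)) *
        (mcResolvent K π g y - ∫ z, mcResolvent K π g z ∂(K x)) ∂(K x)

/-- Covariance under `π` of two bounded measurable functions. -/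
noncomputable def covPi (π : Measure E) (f g : E → ℝ) : ℝ :=
  ∫ x, (f x - ∫ y, f y ∂π) * (g x - ∫ y, g y ∂π) ∂π

/-!
The Doeblin minorization makes `K^i` a strict contraction, by the factor `1 - ε`, of the
oscillation of bounded functions, so `K^j f - π f` decays geometrically and the resolvent
`T f` is a bounded measurable solution of the Poisson equation `K (T f) = T f - (f - π f)`
with `π (T f) = 0`. Pointwise `Γ(f, f)(x)` is the variance of `T f` under `K x`; integrating
against the invariant `π` turns `π (K (T f)²)` into `π ((T f)²)`, so
`π Γ(f, f) = Var_π (T f) - Var_π (T f - f) = 2 Cov_π (f, T f) - Var_π f`,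
and `Cov_π (f, T f) = Σ_{j ≥ 0} Cov_π (f, K^j f)` by dominated convergence.
-/

open Filter Set

section Integrability

variable {α : Type*} [MeasurableSpace α] {μ : Measure α} {g : α → ℝ}

lemma Measurable.memLp_of_abs_le (hg : Measurable g) [IsFiniteMeasure μ] {C : ℝ}
    (hC : ∀ x, |g x| ≤ C) (p : ENNReal) : MemLp g p μ :=
  MemLp.of_bound hg.aestronglyMeasurable C (ae_of_all _ hC)

lemma Measurable.integrable_of_abs_le (hg : Measurable g) [IsFiniteMeasure μ] {C : ℝ}
    (hC : ∀ x, |g x| ≤ C) : Integrable g μ :=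
  (hg.memLp_of_abs_le hC 1).integrable le_rfl

lemma Measurable.integrable_of_mem_Icc (hg : Measurable g) [IsFiniteMeasure μ] {a b : ℝ}
    (hab : ∀ x, g x ∈ Icc a b) : Integrable g μ :=
  (memLp_of_bounded (ae_of_all _ hab) hg.aestronglyMeasurable 1).integrable le_rfl

lemma abs_integral_le_of_abs_le [IsProbabilityMeasure μ] {C : ℝ} (hC : ∀ x, |g x| ≤ C) :
    |∫ x, g x ∂μ| ≤ C := by
  simpa using norm_integral_le_of_norm_le_const (μ := μ) (f := g) (C := C) (ae_of_all _ hC)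

lemma Measurable.integral_kernel {β : Type*} [MeasurableSpace β] {κ : Kernel β α}
    (hg : Measurable g) : Measurable fun x => ∫ y, g y ∂κ x :=
  hg.stronglyMeasurable.integral_kernel.measurable

lemma hasSum_integral_of_abs_le [IsFiniteMeasure μ] {F : ℕ → α → ℝ}
    (hF : ∀ j, Measurable (F j)) {B : ℕ → ℝ} (hFB : ∀ j x, |F j x| ≤ B j) (hB : Summable B) :
    HasSum (fun j => ∫ x, F j x ∂μ) (∫ x, ∑' j, F j x ∂μ) := by
  refine hasSum_integral_of_summable_integral_norm
    (fun j => (hF j).integrable_of_abs_le (hFB j)) ?_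
  refine (hB.mul_right (μ.real univ)).of_norm_bounded fun j =>
    norm_integral_le_of_norm_le_const (ae_of_all μ fun x => ?_)
  simpa using hFB j x

lemma abs_sub_integral_le_of_mem_Icc [IsProbabilityMeasure μ] (hg : Measurable g) {a D : ℝ}
    (hgI : ∀ x, g x ∈ Icc a (a + D)) (x : α) : |g x - ∫ y, g y ∂μ| ≤ D := by
  have hgi : Integrable g μ := hg.integrable_of_mem_Icc hgI
  have lower : a ≤ ∫ y, g y ∂μ := by
    simpa using integral_mono (integrable_const a) hgi fun y => (hgI y).1
  have upper : ∫ y, g y ∂μ ≤ a + D := by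
    simpa using integral_mono hgi (integrable_const (a + D)) fun y => (hgI y).2
  exact abs_le.2 ⟨by linarith [(hgI x).1], by linarith [(hgI x).2]⟩

end Integrability

lemma summable_pow_div {q : ℝ} (hq0 : 0 ≤ q) (hq1 : q < 1) {i : ℕ} (hi : 1 ≤ i) :
    Summable fun j : ℕ => q ^ (j / i) := by
  have : NeZero i := ⟨by omega⟩
  have hprod : Summable fun p : ℕ × Fin i => q ^ p.1 := by
    refine (summable_prod_of_nonneg fun p => pow_nonneg hq0 _).mpr ⟨fun n => ?_, ?_⟩
    · exact summable_of_hasFiniteSupport (Set.toFinite _)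
    · simpa [tsum_const, nsmul_eq_mul] using (summable_geometric_of_lt_one hq0 hq1).mul_left (i : ℝ)
  exact ((Nat.divModEquiv i).summable_iff (f := fun p : ℕ × Fin i => q ^ p.1)).mpr hprod

namespace ProbabilityTheory.Kernel

variable {α : Type*} [MeasurableSpace α]

lemma one_eq_id : (1 : Kernel α α) = Kernel.id := rfl

instance isMarkovKernel_pow (κ : Kernel α α) [IsMarkovKernel κ] (n : ℕ) :
    IsMarkovKernel (κ ^ n) := by
  induction n with
  | zero => rw [pow_zero, one_eq_id]; infer_instance
  | succ n ih => rw [pow_succ']; exact IsMarkovKernel.comp _ _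

lemma integral_pow_zero_apply (κ : Kernel α α) {g : α → ℝ} (hg : Measurable g) (x : α) :
    ∫ y, g y ∂(κ ^ 0) x = g x := by
  rw [pow_zero, one_eq_id, id_apply, integral_dirac' _ _ hg.stronglyMeasurable]

lemma integral_pow_add_apply (κ : Kernel α α) (m n : ℕ) (x : α) {g : α → ℝ}
    (hg : Integrable g ((κ ^ (m + n)) x)) :
    ∫ z, g z ∂(κ ^ (m + n)) x = ∫ y, ∫ z, g z ∂(κ ^ n) y ∂(κ ^ m) x := by
  rw [add_comm, pow_add] at *
  exact integral_comp hg

lemma Invariant.pow {κ : Kernel α α} {μ : Measure α} (h : Invariant κ μ) (n : ℕ) :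
    Invariant (κ ^ n) μ := by
  induction n with
  | zero => simp [Invariant, one_eq_id]
  | succ n ih => rw [pow_succ']; exact h.comp ih

lemma Invariant.integral_integral {κ : Kernel α α} {μ : Measure α} (h : Invariant κ μ)
    {g : α → ℝ} (hg : Integrable g μ) : ∫ x, ∫ y, g y ∂κ x ∂μ = ∫ y, g y ∂μ := by
  rw [Invariant] at h
  rw [← h] at hg
  conv_rhs => rw [← h]
  rw [Measure.comp_eq_comp_const_apply, integral_comp]
  · simp
  · rwa [← Measure.comp_eq_comp_const_apply]

end ProbabilityTheory.Kernel

lemma kiter_eq_pow (K : Kernel E E) (n : ℕ) : kiter K n = ⇑(K ^ n) := by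
  induction n with
  | zero => funext x; rw [kiter, pow_zero, Kernel.one_eq_id, Kernel.id_apply]
  | succ n ih => funext x; rw [kiter, ih, pow_succ']; rfl

section Doeblin

variable {α : Type*} [MeasurableSpace α] {ε : ℝ} {g : α → ℝ}

lemma integral_sub_smul_integral_mem_Icc {μ ρ : Measure α} [IsProbabilityMeasure μ]
    [IsProbabilityMeasure ρ] (hε : 0 ≤ ε) (hle : ENNReal.ofReal ε • ρ ≤ μ)
    (hg : Measurable g) {a b : ℝ} (hab : ∀ x, g x ∈ Icc a b) :
    ∫ x, g x ∂μ - ε * ∫ x, g x ∂ρ ∈ Icc ((1 - ε) * a) ((1 - ε) * b) := by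
  have mono : ∀ h : α → ℝ, Measurable h → (∀ x, h x ∈ Icc 0 (b - a)) →
      ε * ∫ x, h x ∂ρ ≤ ∫ x, h x ∂μ := fun h hh hh0 => by
    have := integral_mono_measure hle (ae_of_all _ fun x => (hh0 x).1)
      (hh.integrable_of_mem_Icc hh0)
    rwa [integral_smul_measure, ENNReal.toReal_ofReal hε, smul_eq_mul] at this
  have hgi : ∀ ν : Measure α, [IsProbabilityMeasure ν] → Integrable g ν := fun ν _ =>
    hg.integrable_of_mem_Icc hab
  have lower := mono (fun x => g x - a) (hg.sub_const a)
    fun x => ⟨sub_nonneg.2 (hab x).1, by linarith [(hab x).2]⟩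
  have upper := mono (fun x => b - g x) (hg.const_sub b)
    fun x => ⟨sub_nonneg.2 (hab x).2, by linarith [(hab x).1]⟩
  simp only [integral_sub (hgi _) (integrable_const _), integral_sub (integrable_const _) (hgi _),
    integral_const, probReal_univ, smul_eq_mul, one_mul] at lower upper
  constructor <;> linarith

namespace ProbabilityTheory.Kernel

lemma exists_integral_mem_Icc_of_minorization [Nonempty α] (κ : Kernel α α) [IsMarkovKernel κ]
    (hε : 0 ≤ ε) (hmin : ∀ x y, ENNReal.ofReal ε • κ y ≤ κ x) (hg : Measurable g) {a D : ℝ}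
    (hgI : ∀ x, g x ∈ Icc a (a + D)) :
    ∃ a', ∀ x, ∫ y, g y ∂κ x ∈ Icc a' (a' + (1 - ε) * D) := by
  obtain ⟨z⟩ := ‹Nonempty α›
  -- every `κ x` contains the common part `ε • κ z`, which contributes the same `ε ∫ g ∂κ z`
  refine ⟨(1 - ε) * a + ε * ∫ y, g y ∂κ z, fun x => ?_⟩
  have := integral_sub_smul_integral_mem_Icc hε (hmin x z) hg hgI
  constructor <;> linarith [this.1, this.2]

lemma exists_integral_pow_mem_Icc_of_minorization [Nonempty α] (κ : Kernel α α)
    [IsMarkovKernel κ] (hε : 0 ≤ ε) (hmin : ∀ x y, ENNReal.ofReal ε • κ y ≤ κ x)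
    (hg : Measurable g) {a D : ℝ} (hgI : ∀ x, g x ∈ Icc a (a + D)) (n : ℕ) :
    ∃ a', ∀ x, ∫ y, g y ∂(κ ^ n) x ∈ Icc a' (a' + (1 - ε) ^ n * D) := by
  induction n with
  | zero => exact ⟨a, fun x => by rw [pow_zero, one_mul, integral_pow_zero_apply κ hg]; exact hgI x⟩
  | succ n ih =>
    obtain ⟨a', ha'⟩ := ih
    obtain ⟨a'', ha''⟩ := exists_integral_mem_Icc_of_minorization κ hε hmin
      hg.integral_kernel ha'
    refine ⟨a'', fun x => ?_⟩
    have hsplit := integral_pow_add_apply κ 1 n x (hg.integrable_of_mem_Icc hgI)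
    rw [add_comm, pow_one] at hsplit
    rw [hsplit, pow_succ', mul_assoc]
    exact ha'' x

lemma abs_integral_pow_sub_integral_le (κ : Kernel α α) [IsMarkovKernel κ] (μ : Measure α)
    [IsProbabilityMeasure μ] (hμ : κ.Invariant μ) {i : ℕ} (hε : 0 ≤ ε)
    (hmin : ∀ x y, ENNReal.ofReal ε • (κ ^ i) y ≤ (κ ^ i) x)
    (hg : Measurable g) {C : ℝ} (hgC : ∀ x, |g x| ≤ C) (j : ℕ) (x : α) :
    |∫ y, g y ∂(κ ^ j) x - ∫ y, g y ∂μ| ≤ 2 * C * (1 - ε) ^ (j / i) := by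
  have := nonempty_of_isProbabilityMeasure μ
  set h : α → ℝ := fun y => ∫ z, g z ∂(κ ^ (j % i)) y
  have hh : Measurable h := hg.integral_kernel
  have hhI : ∀ y, h y ∈ Icc (-C) (-C + 2 * C) := fun y => by
    obtain ⟨lower, upper⟩ := abs_le.1 (abs_integral_le_of_abs_le (μ := (κ ^ (j % i)) y) hgC)
    constructor <;> linarith
  obtain ⟨a, ha⟩ := exists_integral_pow_mem_Icc_of_minorization (κ ^ i) hε hmin hh hhI (j / i)
  have hgi : ∀ ν : Measure α, [IsProbabilityMeasure ν] → Integrable g ν := fun ν _ =>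
    hg.integrable_of_abs_le hgC
  have hsplit : ∀ y, ∫ z, g z ∂(κ ^ j) y = ∫ z, h z ∂((κ ^ i) ^ (j / i)) y := fun y => by
    rw [← pow_mul, ← integral_pow_add_apply κ _ _ y, Nat.div_add_mod]
    exact hgi _
  rw [← (hμ.pow j).integral_integral (hgi μ)]
  simp_rw [hsplit]
  exact (abs_sub_integral_le_of_mem_Icc hh.integral_kernel ha x).trans_eq (by ring)

end ProbabilityTheory.Kernel

end Doeblin

section Resolvent

variable (K : Kernel E E) (π : Measure E) {f : E → ℝ} {B : ℕ → ℝ}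

lemma hasSum_mcResolvent (hdecay : ∀ j x, |∫ y, f y ∂(K ^ j) x - ∫ y, f y ∂π| ≤ B j)
    (hB : Summable B) (x : E) :
    HasSum (fun j => ∫ y, f y ∂(K ^ j) x - ∫ y, f y ∂π) (mcResolvent K π f x) := by
  simp_rw [mcResolvent, kiter_eq_pow]
  exact (hB.of_norm_bounded fun j => hdecay j x).hasSum

lemma abs_mcResolvent_le (hdecay : ∀ j x, |∫ y, f y ∂(K ^ j) x - ∫ y, f y ∂π| ≤ B j)
    (hB : Summable B) (x : E) : |mcResolvent K π f x| ≤ ∑' j, B j :=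
  (hasSum_mcResolvent K π hdecay hB x).norm_le_of_bounded hB.hasSum fun j => hdecay j x

lemma measurable_mcResolvent (hf : Measurable f)
    (hdecay : ∀ j x, |∫ y, f y ∂(K ^ j) x - ∫ y, f y ∂π| ≤ B j) (hB : Summable B) :
    Measurable (mcResolvent K π f) :=
  measurable_of_tendsto_metrizable
    (fun _ => Finset.measurable_sum _ fun _ _ => hf.integral_kernel.sub_const _)
    (tendsto_pi_nhds.2 fun x => (hasSum_mcResolvent K π hdecay hB x).tendsto_sum_nat)

lemma integral_mcResolvent_eq_zero [IsMarkovKernel K] [IsProbabilityMeasure π] (hπ : K.Invariant π)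
    (hf : Measurable f) {C : ℝ} (hfC : ∀ x, |f x| ≤ C)
    (hdecay : ∀ j x, |∫ y, f y ∂(K ^ j) x - ∫ y, f y ∂π| ≤ B j) (hB : Summable B) :
    ∫ x, mcResolvent K π f x ∂π = 0 := by
  have hsum := hasSum_integral_of_abs_le (μ := π)
    (fun j => hf.integral_kernel.sub_const _) hdecay hB
  simp_rw [fun x => (hasSum_mcResolvent K π hdecay hB x).tsum_eq] at hsum
  refine hsum.unique ?_
  convert hasSum_zero with j
  rw [integral_sub (hf.integral_kernel.integrable_of_abs_le
      fun x => abs_integral_le_of_abs_le hfC) (integrable_const _),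
    (hπ.pow j).integral_integral (hf.integrable_of_abs_le hfC)]
  simp

lemma integral_mcResolvent_kernel [IsMarkovKernel K]
    (hf : Measurable f) {C : ℝ} (hfC : ∀ x, |f x| ≤ C)
    (hdecay : ∀ j x, |∫ y, f y ∂(K ^ j) x - ∫ y, f y ∂π| ≤ B j) (hB : Summable B) (x : E) :
    ∫ y, mcResolvent K π f y ∂K x = mcResolvent K π f x - (f x - ∫ y, f y ∂π) := by
  have hsum := hasSum_integral_of_abs_le (μ := K x)
    (fun j => hf.integral_kernel.sub_const _) hdecay hB
  simp_rw [fun x => (hasSum_mcResolvent K π hdecay hB x).tsum_eq] at hsum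
  have hshift := (hasSum_nat_add_iff' 1).2 (hasSum_mcResolvent K π hdecay hB x)
  simp only [Finset.range_one, Finset.sum_singleton, K.integral_pow_zero_apply hf] at hshift
  refine hsum.unique (hshift.congr_fun fun j => ?_)
  have hstep := K.integral_pow_add_apply 1 j x (hf.integrable_of_abs_le hfC)
  rw [pow_one] at hstep
  rw [integral_sub (hf.integral_kernel.integrable_of_abs_le
      fun x => abs_integral_le_of_abs_le hfC) (integrable_const _), ← hstep, add_comm]
  simp

lemma hasSum_covariance_mcResolvent [IsMarkovKernel K] [IsProbabilityMeasure π]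
    (hπ : K.Invariant π) (hf : Measurable f) {C : ℝ} (hfC : ∀ x, |f x| ≤ C)
    (hdecay : ∀ j x, |∫ y, f y ∂(K ^ j) x - ∫ y, f y ∂π| ≤ B j) (hB : Summable B) :
    HasSum (fun j => cov[f, fun x => ∫ y, f y ∂(K ^ j) x; π]) cov[f, mcResolvent K π f; π] := by
  have hcentered : ∀ x, |f x - ∫ y, f y ∂π| ≤ B 0 := fun x => by
    have := hdecay 0 x
    rwa [K.integral_pow_zero_apply hf] at this
  have hbound : ∀ j x,
      |(f x - ∫ y, f y ∂π) * (∫ y, f y ∂(K ^ j) x - ∫ y, f y ∂π)| ≤ B 0 * B j := fun j x => by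
    rw [abs_mul]
    exact mul_le_mul (hcentered x) (hdecay j x) (abs_nonneg _) ((abs_nonneg _).trans (hcentered x))
  have hsum := hasSum_integral_of_abs_le (μ := π)
    (F := fun j x => (f x - ∫ y, f y ∂π) * (∫ y, f y ∂(K ^ j) x - ∫ y, f y ∂π))
    (fun j => (hf.sub_const _).mul (hf.integral_kernel.sub_const _)) hbound (hB.mul_left (B 0))
  simp_rw [tsum_mul_left, fun x => (hasSum_mcResolvent K π hdecay hB x).tsum_eq] at hsum
  simp only [covariance, integral_mcResolvent_eq_zero K π hπ hf hfC hdecay hB, sub_zero]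
  convert hsum using 6 with j x
  rw [(hπ.pow j).integral_integral (hf.integrable_of_abs_le hfC)]

lemma integral_mul_mcResolvent [IsMarkovKernel K] [IsProbabilityMeasure π]
    (hπ : K.Invariant π) (hf : Measurable f) {C : ℝ} (hfC : ∀ x, |f x| ≤ C)
    (hdecay : ∀ j x, |∫ y, f y ∂(K ^ j) x - ∫ y, f y ∂π| ≤ B j) (hB : Summable B) :
    ∫ x, f x * mcResolvent K π f x ∂π = cov[f, mcResolvent K π f; π] := by
  rw [covariance_eq_sub (hf.memLp_of_abs_le hfC 2)
    ((measurable_mcResolvent K π hf hdecay hB).memLp_of_abs_le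
      (abs_mcResolvent_le K π hdecay hB) 2),
    integral_mcResolvent_eq_zero K π hπ hf hfC hdecay hB, mul_zero, sub_zero]
  rfl

lemma integral_neg_sq_add_two_mul_mcResolvent [IsMarkovKernel K] [IsProbabilityMeasure π]
    (hπ : K.Invariant π) (hf : Measurable f) {C : ℝ} (hfC : ∀ x, |f x| ≤ C)
    (hdecay : ∀ j x, |∫ y, f y ∂(K ^ j) x - ∫ y, f y ∂π| ≤ B j) (hB : Summable B) :
    ∫ x, (-(f x - ∫ y, f y ∂π) ^ 2 + 2 * f x * mcResolvent K π f x) ∂π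
      = 2 * cov[f, mcResolvent K π f; π] - Var[f; π] := by
  have hfL2 : MemLp f 2 π := hf.memLp_of_abs_le hfC 2
  have hTL2 : MemLp (mcResolvent K π f) 2 π :=
    (measurable_mcResolvent K π hf hdecay hB).memLp_of_abs_le (abs_mcResolvent_le K π hdecay hB) 2
  have hsq : Integrable (fun x => (f x - ∫ y, f y ∂π) ^ 2) π :=
    (hfL2.sub (memLp_const _)).integrable_sq
  have hfT : Integrable (fun x => f x * mcResolvent K π f x) π := hfL2.integrable_mul hTL2
  simp_rw [mul_assoc]
  rw [integral_add hsq.fun_neg (hfT.const_mul 2), integral_neg, integral_const_mul,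
    integral_mul_mcResolvent K π hπ hf hfC hdecay hB, variance_eq_integral hf.aemeasurable]
  ring

lemma integral_covFun_self [IsMarkovKernel K] [IsProbabilityMeasure π]
    (hπ : K.Invariant π) (hf : Measurable f) {C : ℝ} (hfC : ∀ x, |f x| ≤ C)
    (hdecay : ∀ j x, |∫ y, f y ∂(K ^ j) x - ∫ y, f y ∂π| ≤ B j) (hB : Summable B) :
    ∫ x, covFun K π f f x ∂π = 2 * cov[f, mcResolvent K π f; π] - Var[f; π] := by
  set T := mcResolvent K π f
  set c := ∫ y, f y ∂π
  have hT : Measurable T := measurable_mcResolvent K π hf hdecay hB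
  have hTS : ∀ x, |T x| ≤ ∑' j, B j := abs_mcResolvent_le K π hdecay hB
  have hTL2 : ∀ ν : Measure E, [IsProbabilityMeasure ν] → MemLp T 2 ν := fun ν _ =>
    hT.memLp_of_abs_le hTS 2
  have hfL2 : MemLp f 2 π := hf.memLp_of_abs_le hfC 2
  have hKTL2 : MemLp (fun x => T x - f x + c) 2 π := ((hTL2 π).sub hfL2).add (memLp_const c)
  have hpoisson : ∀ x, ∫ y, T y ∂K x = T x - f x + c := fun x => by
    rw [integral_mcResolvent_kernel K π hf hfC hdecay hB x]; ring
  have hΓ : ∀ x, covFun K π f f x = ∫ y, T y ^ 2 ∂K x - (T x - f x + c) ^ 2 := fun x => by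
    rw [← hpoisson]
    exact (covariance_self hT.aemeasurable).trans (variance_eq_sub (hTL2 _))
  have hKT : ∫ x, (T x - f x + c) ∂π = 0 := by
    simp_rw [← hpoisson]
    rw [hπ.integral_integral ((hTL2 π).integrable one_le_two)]
    exact integral_mcResolvent_eq_zero K π hπ hf hfC hdecay hB
  have hKT2 : Integrable (fun x => ∫ y, T y ^ 2 ∂K x) π :=
    (hT.pow_const 2).integral_kernel.integrable_of_abs_le fun x =>
      abs_integral_le_of_abs_le (C := (∑' j, B j) ^ 2) fun y => by
        rw [abs_pow]; exact pow_le_pow_left₀ (abs_nonneg _) (hTS y) 2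
  calc ∫ x, covFun K π f f x ∂π
      = ∫ x, ∫ y, T y ^ 2 ∂K x ∂π - ∫ x, (T x - f x + c) ^ 2 ∂π := by
        simp_rw [hΓ]; exact integral_sub hKT2 hKTL2.integrable_sq
    _ = Var[T; π] - Var[fun x => (T - f) x + c; π] := by
        rw [hπ.integral_integral (hTL2 π).integrable_sq,
          variance_of_integral_eq_zero hT.aemeasurable
            (integral_mcResolvent_eq_zero K π hπ hf hfC hdecay hB),
          variance_of_integral_eq_zero ((hT.sub hf).add_const c).aemeasurable hKT]
        rfl
    _ = 2 * cov[f, T; π] - Var[f; π] := by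
        rw [variance_add_const (hT.sub hf).aestronglyMeasurable, variance_sub (hTL2 π) hfL2,
          covariance_comm]
        ring

lemma covariance_mcResolvent_eq [IsMarkovKernel K] [IsProbabilityMeasure π]
    (hπ : K.Invariant π) (hf : Measurable f) {C : ℝ} (hfC : ∀ x, |f x| ≤ C)
    (hdecay : ∀ j x, |∫ y, f y ∂(K ^ j) x - ∫ y, f y ∂π| ≤ B j) (hB : Summable B) :
    cov[f, mcResolvent K π f; π]
      = Var[f; π] + ∑' j, cov[f, fun x => ∫ y, f y ∂(K ^ (j + 1)) x; π] := by
  have hsum := hasSum_covariance_mcResolvent K π hπ hf hfC hdecay hB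
  rw [hsum.tsum_eq.symm, hsum.summable.tsum_eq_zero_add]
  simp_rw [K.integral_pow_zero_apply hf]
  rw [covariance_self hf.aemeasurable]

end Resolvent

lemma covPi_eq_covariance (π : Measure E) (f g : E → ℝ) : covPi π f g = cov[f, g; π] := rfl

/-- Asymptotic-variance identity:
`π(Γ(f,f)) = π(−[f − π(f)]² + 2 f T(f)) = Var_π(f) + 2 Σ_{j≥1} Cov_π(f, K^j f)`. -/
theorem covFun_integral_eq_iact (K : Kernel E E) [IsMarkovKernel K]
    (π : Measure E) [IsProbabilityMeasure π] (hπ : π.bind (fun x => K x) = π)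
    (i : ℕ) (hi : 1 ≤ i) (ε : ℝ) (hε : ε ∈ Set.Ioc (0 : ℝ) 1)
    (hmin : ∀ x y : E, ENNReal.ofReal ε • kiter K i y ≤ kiter K i x)
    (f : E → ℝ) (hf : Measurable f) (C : ℝ) (hfb : ∀ x, |f x| ≤ C) :
    (∫ x, covFun K π f f x ∂π
        = ∫ x, (-(f x - ∫ y, f y ∂π) ^ 2 + 2 * f x * mcResolvent K π f x) ∂π) ∧
      ∫ x, covFun K π f f x ∂π
        = (∫ x, (f x - ∫ y, f y ∂π) ^ 2 ∂π)
          + 2 * ∑' j : ℕ, covPi π f (fun x => ∫ y, f y ∂(kiter K (j + 1) x)) := by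
  have hinv : K.Invariant π := hπ
  rw [kiter_eq_pow] at hmin
  have hdecay := K.abs_integral_pow_sub_integral_le π hinv hε.1.le hmin hf hfb
  have hB : Summable fun j => 2 * C * (1 - ε) ^ (j / i) :=
    (summable_pow_div (by linarith [hε.2]) (by linarith [hε.1]) hi).mul_left _
  have hΓ := integral_covFun_self K π hinv hf hfb hdecay hB
  refine ⟨?_, ?_⟩
  · rw [hΓ, integral_neg_sq_add_two_mul_mcResolvent K π hinv hf hfb hdecay hB]
  · simp_rw [covPi_eq_covariance, kiter_eq_pow]
    rw [hΓ, covariance_mcResolvent_eq K π hinv hf hfb hdecay hB,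
      variance_eq_integral hf.aemeasurable]
    ring
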